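/- Let R = ℝ[x_1,…,x_n] with s = s_i, and B_s = R ⊗_{R^s} R. Then B_s ⊗_R B_s is isomorphic as an (R,R)-bimodule to the direct sum of two copies of B_s; explicitly, B_s ⊗_R B_s ≅ B_s ⊕ B_s via the decomposition determined by the idempotent splitting using 1 ⊗ 1 ⊗ 1 and 1 ⊗ x_i ⊗ 1 - 1 ⊗ s(x_i) ⊗ 1 appropriately (ignoring grading shifts). -/

import Mathlib

set_option synthInstance.maxHeartbeats 1000000
set_option maxHeartbeats 4000000


open MvPolynomial

/-- The action of the simple transposition `sᵢ = (i, i+1)` on the polynomial ring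
`R = ℝ[x₀, x₁, …]` by swapping the variables `xᵢ` and `x_{i+1}`. -/
noncomputable def sigmaAct (i : ℕ) : MvPolynomial ℕ ℝ →ₐ[ℝ] MvPolynomial ℕ ℝ :=
  MvPolynomial.rename (Equiv.swap i (i + 1))

open TensorProduct

/-- The invariant subring `Rˢ` of `s = sᵢ`, as a subalgebra of `R = ℝ[x₀, x₁, …]`. -/
noncomputable def Rinv (i : ℕ) : Subalgebra ℝ (MvPolynomial ℕ ℝ) :=
  AlgHom.equalizer (sigmaAct i) (AlgHom.id ℝ (MvPolynomial ℕ ℝ))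

/-- `Bₛ = R ⊗_{Rˢ} R`, a left `R`-module (via the first factor). -/
noncomputable abbrev Bs (i : ℕ) : Type :=
  TensorProduct ↥(Rinv i) (MvPolynomial ℕ ℝ) (MvPolynomial ℕ ℝ)

/-- `Bₛ ⊗_R Bₛ = R ⊗_{Rˢ} R ⊗_{Rˢ} R`. -/
noncomputable abbrev BsBs (i : ℕ) : Type :=
  TensorProduct ↥(Rinv i) (MvPolynomial ℕ ℝ) (Bs i)

/-- Right multiplication by `r ∈ R` on `Bₛ` (an endomorphism of left `R`-modules). -/
noncomputable def rmulB (i : ℕ) (r : MvPolynomial ℕ ℝ) : Bs i →ₗ[MvPolynomial ℕ ℝ] Bs i :=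
  TensorProduct.AlgebraTensorModule.map LinearMap.id (LinearMap.mulRight ↥(Rinv i) r)

/-- Right multiplication by `r ∈ R` on `Bₛ`, as an `Rˢ`-linear map. -/
noncomputable def rmulB' (i : ℕ) (r : MvPolynomial ℕ ℝ) : Bs i →ₗ[↥(Rinv i)] Bs i :=
  LinearMap.lTensor (MvPolynomial ℕ ℝ) (LinearMap.mulRight ↥(Rinv i) r)

/-- Right multiplication by `r ∈ R` on `Bₛ ⊗_R Bₛ` (an endomorphism of left `R`-modules). -/
noncomputable def rmulBB (i : ℕ) (r : MvPolynomial ℕ ℝ) : BsBs i →ₗ[MvPolynomial ℕ ℝ] BsBs i :=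
  TensorProduct.AlgebraTensorModule.map LinearMap.id (rmulB' i r)


namespace Stmt16

abbrev Rp := MvPolynomial ℕ ℝ

noncomputable def zz (i : ℕ) : Rp := X i - X (i + 1)

lemma sigma_sigma (i : ℕ) (f : Rp) : sigmaAct i (sigmaAct i f) = f := by
  simp only [sigmaAct, rename_rename]
  rw [show (⇑(Equiv.swap i (i+1)) ∘ ⇑(Equiv.swap i (i+1))) = id from funext fun j => Equiv.swap_apply_self _ _ _]
  simp

lemma sigma_zz (i : ℕ) : sigmaAct i (zz i) = - zz i := by
  simp [sigmaAct, zz]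

lemma zz_ne (i : ℕ) : zz i ≠ 0 := by
  simp only [zz, sub_ne_zero]
  exact fun h => by simpa using MvPolynomial.X_injective h

lemma zz_dvd (i : ℕ) (f : Rp) : zz i ∣ (f - sigmaAct i f) := by
  set I : Ideal Rp := Ideal.span {zz i}
  have key : (Ideal.Quotient.mkₐ ℝ I).comp (sigmaAct i) = Ideal.Quotient.mkₐ ℝ I := by
    apply MvPolynomial.algHom_ext
    intro j
    simp only [AlgHom.comp_apply, sigmaAct, rename_X, Ideal.Quotient.mkₐ_eq_mk]
    have hz : Ideal.Quotient.mk I (X i : Rp) = Ideal.Quotient.mk I (X (i+1)) := by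
      rw [Ideal.Quotient.eq]
      exact Ideal.subset_span rfl
    rcases eq_or_ne j i with rfl | hji
    · simpa [Equiv.swap_apply_left] using hz.symm
    rcases eq_or_ne j (i+1) with rfl | hji1
    · simpa [Equiv.swap_apply_right] using hz
    · rw [Equiv.swap_apply_of_ne_of_ne hji hji1]
  have := congrArg (fun g => g f) key
  simp only [AlgHom.comp_apply, Ideal.Quotient.mkₐ_eq_mk] at this
  rw [← Ideal.mem_span_singleton, ← Ideal.Quotient.eq_zero_iff_mem]
  rw [map_sub]; exact sub_eq_zero.mpr this.symm

end Stmt16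

namespace Stmt16

noncomputable def del (i : ℕ) (f : Rp) : Rp := C (1/2 : ℝ) * (zz_dvd i f).choose

lemma C2 : (C (2:ℝ) : Rp) = 2 := map_ofNat (C : ℝ →+* Rp) 2

lemma del_spec (i : ℕ) (f : Rp) : (2 : Rp) * zz i * del i f = f - sigmaAct i f := by
  have h := (zz_dvd i f).choose_spec
  rw [del, ← C2]
  calc (C (2:ℝ) : Rp) * zz i * (C (1/2:ℝ) * (zz_dvd i f).choose)
      = (C (2:ℝ) * C (1/2:ℝ)) * (zz i * (zz_dvd i f).choose) := by ring
    _ = 1 * (zz i * (zz_dvd i f).choose) := by rw [← map_mul]; norm_num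
    _ = f - sigmaAct i f := by rw [one_mul, ← h]

lemma del_unique (i : ℕ) {f h : Rp} (hh : (2 : Rp) * zz i * h = f - sigmaAct i f) :
    h = del i f := by
  apply mul_left_cancel₀ (a := (2:Rp) * zz i) (by
    simp only [ne_eq, mul_eq_zero, not_or]
    exact ⟨two_ne_zero, zz_ne i⟩)
  rw [hh, del_spec]

lemma del_inv (i : ℕ) (f : Rp) : sigmaAct i (del i f) = del i f := by
  apply del_unique
  have h := congrArg (sigmaAct i) (del_spec i f)
  have h2 : sigmaAct i (2 : Rp) = 2 := map_ofNat _ 2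
  simp only [map_mul, map_sub, sigma_zz, sigma_sigma, h2] at h
  calc (2:Rp) * zz i * sigmaAct i (del i f)
      = -((2:Rp) * (-zz i) * sigmaAct i (del i f)) := by ring
    _ = -(sigmaAct i f - f) := by rw [← h]
    _ = f - sigmaAct i f := by ring

lemma del_mem (i : ℕ) (f : Rp) : del i f ∈ Rinv i := by
  rw [Rinv, AlgHom.mem_equalizer]
  simpa using del_inv i f

lemma del_add (i : ℕ) (f g : Rp) : del i (f + g) = del i f + del i g := by
  symm; apply del_unique
  rw [mul_add, del_spec, del_spec, map_add]; ring

lemma del_inv_mul (i : ℕ) (c f : Rp) (hc : sigmaAct i c = c) :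
    del i (c * f) = c * del i f := by
  symm; apply del_unique
  rw [map_mul, hc]
  have := del_spec i f
  calc (2:Rp) * zz i * (c * del i f) = c * ((2:Rp) * zz i * del i f) := by ring
    _ = c * (f - sigmaAct i f) := by rw [this]
    _ = c * f - c * sigmaAct i f := by ring

noncomputable def gg (i : ℕ) (f : Rp) : Rp := C (1/2 : ℝ) * (f + sigmaAct i f)

lemma gg_inv (i : ℕ) (f : Rp) : sigmaAct i (gg i f) = gg i f := by
  simp only [gg, map_mul, map_add, sigma_sigma, algHom_C, MvPolynomial.algebraMap_eq]
  ring

lemma gg_mem (i : ℕ) (f : Rp) : gg i f ∈ Rinv i := by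
  rw [Rinv, AlgHom.mem_equalizer]; simpa using gg_inv i f

lemma gg_add (i : ℕ) (f g : Rp) : gg i (f + g) = gg i f + gg i g := by
  simp only [gg, map_add]; ring

lemma gg_inv_mul (i : ℕ) (c f : Rp) (hc : sigmaAct i c = c) :
    gg i (c * f) = c * gg i f := by
  simp only [gg, map_mul, hc]; ring

lemma gg_add_zz_del (i : ℕ) (f : Rp) : gg i f + zz i * del i f = f := by
  have h := del_spec i f
  have hz : zz i * del i f = C (1/2 : ℝ) * (f - sigmaAct i f) := by
    rw [show (C (1/2:ℝ) : Rp) * (f - sigmaAct i f) = C (1/2:ℝ) * ((2:Rp) * zz i * del i f) by rw [h],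
      ← C2, ← mul_assoc, ← mul_assoc, ← map_mul]
    norm_num
  rw [hz, gg]
  rw [show C (1/2:ℝ) * (f + sigmaAct i f) + C (1/2:ℝ) * (f - sigmaAct i f)
      = (C (1/2:ℝ) * C (2:ℝ)) * f by rw [C2]; ring, ← map_mul]
  norm_num

lemma gg_one (i : ℕ) : gg i 1 = 1 := by
  simp only [gg, map_one]
  rw [one_add_one_eq_two, ← C2, ← map_mul]
  norm_num

lemma del_one (i : ℕ) : del i 1 = 0 := by
  symm; apply del_unique; simp

lemma gg_zz (i : ℕ) : gg i (zz i) = 0 := by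
  simp [gg, sigma_zz]

lemma del_zz (i : ℕ) : del i (zz i) = 1 := by
  symm; apply del_unique; rw [sigma_zz]; ring

end Stmt16

namespace Stmt16

lemma mem_Rinv {i : ℕ} {c : Rp} (hc : c ∈ Rinv i) : sigmaAct i c = c := hc

noncomputable def ggLin (i : ℕ) : Rp →ₗ[↥(Rinv i)] Rp where
  toFun := gg i
  map_add' := gg_add i
  map_smul' c f := by
    simp only [Subalgebra.smul_def, smul_eq_mul, RingHom.id_apply]
    exact gg_inv_mul i _ f (mem_Rinv c.2)

noncomputable def delLin (i : ℕ) : Rp →ₗ[↥(Rinv i)] Rp where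
  toFun := del i
  map_add' := del_add i
  map_smul' c f := by
    simp only [Subalgebra.smul_def, smul_eq_mul, RingHom.id_apply]
    exact del_inv_mul i _ f (mem_Rinv c.2)

noncomputable def L1 (i : ℕ) : Bs i →ₗ[↥(Rinv i)] Rp :=
  TensorProduct.lift ((LinearMap.mul ↥(Rinv i) Rp).comp (ggLin i))

noncomputable def L2 (i : ℕ) : Bs i →ₗ[↥(Rinv i)] Rp :=
  TensorProduct.lift ((LinearMap.mul ↥(Rinv i) Rp).comp (delLin i))

noncomputable def phi (i : ℕ) : BsBs i →ₗ[Rp] Bs i × Bs i :=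
  (TensorProduct.AlgebraTensorModule.map LinearMap.id (L1 i)).prod
    (TensorProduct.AlgebraTensorModule.map LinearMap.id (L2 i))

noncomputable def psi (i : ℕ) : Bs i × Bs i →ₗ[Rp] BsBs i :=
  (TensorProduct.AlgebraTensorModule.map LinearMap.id (TensorProduct.mk ↥(Rinv i) Rp Rp 1)).coprod
    (TensorProduct.AlgebraTensorModule.map LinearMap.id (TensorProduct.mk ↥(Rinv i) Rp Rp (zz i)))

lemma phi_tmul (i : ℕ) (a f b : Rp) :
    phi i (a ⊗ₜ (f ⊗ₜ b)) = (a ⊗ₜ (gg i f * b), a ⊗ₜ (del i f * b)) := by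
  rfl

lemma psi_tmul (i : ℕ) (u v p q : Rp) :
    psi i (u ⊗ₜ v, p ⊗ₜ q) = u ⊗ₜ ((1 : Rp) ⊗ₜ v) + p ⊗ₜ (zz i ⊗ₜ q) := by
  rfl

lemma invar_tmul (i : ℕ) {c : Rp} (hc : c ∈ Rinv i) (f b : Rp) :
    f ⊗ₜ[↥(Rinv i)] (c * b) = (f * c) ⊗ₜ[↥(Rinv i)] b := by
  have h1 : (⟨c, hc⟩ : ↥(Rinv i)) • b = c * b := rfl
  have h2 : (⟨c, hc⟩ : ↥(Rinv i)) • f = c * f := rfl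
  rw [← h1, tmul_smul, smul_tmul', h2, mul_comm]

end Stmt16

namespace Stmt16

lemma psi_phi_tmul (i : ℕ) (a f b : Rp) :
    psi i (phi i (a ⊗ₜ (f ⊗ₜ b))) = a ⊗ₜ (f ⊗ₜ b) := by
  rw [phi_tmul, psi_tmul, invar_tmul i (gg_mem i f), invar_tmul i (del_mem i f),
    one_mul, ← tmul_add, ← add_tmul, gg_add_zz_del]

lemma psi_phi (i : ℕ) (t : BsBs i) : psi i (phi i t) = t := by
  induction t using TensorProduct.induction_on with
  | zero => simp
  | add x y hx hy => simp [map_add, hx, hy]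
  | tmul a n =>
    induction n using TensorProduct.induction_on with
    | zero => simp
    | add x y hx hy => rw [tmul_add, map_add, map_add, hx, hy]
    | tmul f b => exact psi_phi_tmul i a f b

lemma phi_psi (i : ℕ) (t : Bs i × Bs i) : phi i (psi i t) = t := by
  obtain ⟨t1, t2⟩ := t
  have h1 : ∀ u : Bs i, phi i (psi i (u, 0)) = (u, 0) := by
    intro u
    induction u using TensorProduct.induction_on with
    | zero => show phi i (psi i 0) = 0; simp
    | add x y hx hy => calc phi i (psi i (x + y, 0)) = phi i (psi i (x,0)) + phi i (psi i (y,0)) := by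
                              rw [show ((x+y : Bs i), (0: Bs i)) = (x,(0:Bs i)) + (y,0) by simp, map_add, map_add]
                         _ = (x + y, 0) := by rw [hx, hy]; simp
    | tmul u v =>
      rw [show ((u ⊗ₜ v : Bs i), (0:Bs i)) = (u ⊗ₜ v, (0:Rp) ⊗ₜ (0:Rp)) by rw [zero_tmul],
        psi_tmul, map_add, phi_tmul, phi_tmul, gg_one, del_one, gg_zz, del_zz]
      simp
  have h2 : ∀ u : Bs i, phi i (psi i (0, u)) = (0, u) := by
    intro u
    induction u using TensorProduct.induction_on with
    | zero => show phi i (psi i 0) = 0; simp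
    | add x y hx hy => calc phi i (psi i (0, x + y)) = phi i (psi i (0,x)) + phi i (psi i (0,y)) := by
                              rw [show ((0: Bs i), (x+y : Bs i)) = ((0:Bs i),x) + (0,y) by simp, map_add, map_add]
                         _ = (0, x + y) := by rw [hx, hy]; simp
    | tmul p q =>
      rw [show ((0:Bs i), (p ⊗ₜ q : Bs i)) = ((0:Rp) ⊗ₜ (0:Rp), p ⊗ₜ q) by rw [zero_tmul],
        psi_tmul, map_add, phi_tmul, phi_tmul, gg_one, del_one, gg_zz, del_zz]
      simp
  calc phi i (psi i (t1, t2)) = phi i (psi i (t1, 0)) + phi i (psi i (0, t2)) := by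
        rw [show ((t1 : Bs i), (t2 : Bs i)) = (t1, 0) + (0, t2) by simp, map_add, map_add]
    _ = (t1, t2) := by rw [h1, h2]; simp

noncomputable def eEquiv (i : ℕ) : BsBs i ≃ₗ[Rp] Bs i × Bs i :=
  LinearEquiv.ofLinear (phi i) (psi i)
    (LinearMap.ext (phi_psi i)) (LinearMap.ext (psi_phi i))

end Stmt16


/-- `Bₛ ⊗_R Bₛ ≅ Bₛ ⊕ Bₛ` as `(R,R)`-bimodules (ignoring grading shifts): there is a
left `R`-linear equivalence commuting with right multiplication by every `r ∈ R`. -/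
theorem stmt16 (i : ℕ) :
    ∃ e : BsBs i ≃ₗ[MvPolynomial ℕ ℝ] (Bs i × Bs i),
      ∀ (r : MvPolynomial ℕ ℝ) (t : BsBs i),
        e (rmulBB i r t) = (rmulB i r (e t).1, rmulB i r (e t).2) := by
  refine ⟨Stmt16.eEquiv i, fun r t => ?_⟩
  induction t using TensorProduct.induction_on with
  | zero => simp; rfl
  | add x y hx hy =>
    rw [map_add, map_add, map_add, hx, hy]
    simp [Prod.fst_add, Prod.snd_add, map_add]
  | tmul a n =>
    induction n using TensorProduct.induction_on with
    | zero => simp; rfl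
    | add x y hx hy =>
      rw [tmul_add, map_add, map_add, map_add, hx, hy]
      simp [map_add]
    | tmul f b =>
      show Stmt16.eEquiv i (rmulBB i r (a ⊗ₜ (f ⊗ₜ b))) = _
      have h1 : rmulBB i r (a ⊗ₜ (f ⊗ₜ b)) = a ⊗ₜ (f ⊗ₜ (b * r)) := by
        rw [rmulBB, AlgebraTensorModule.map_tmul, LinearMap.id_apply, rmulB']
        exact congrArg _ (LinearMap.lTensor_tmul _ _ _ _)
      have h2 : ∀ t : BsBs i, Stmt16.eEquiv i t = Stmt16.phi i t := fun _ => rfl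
      rw [h1, h2, h2, Stmt16.phi_tmul, Stmt16.phi_tmul]
      simp [rmulB, mul_assoc]
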